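/- Suppose K = G ⋈ H is an internal Zappa–Szép product of monoids such that G and H are left-cancellative and, for every h ∈ H, the map g ↦ h ▷ g is injective on G. Then K is left-cancellative. -/

import Mathlib

namespace ZSPaper

/-- Internal Zappa–Szép product: every element of `K` has a unique `GH`-decomposition
and a unique `HG`-decomposition. -/
structure ZS (K : Type*) [Monoid K] (G H : Submonoid K) : Prop where
  exGH : ∀ k : K, ∃! p : G × H, (p.1 : K) * (p.2 : K) = k
  exHG : ∀ k : K, ∃! p : H × G, (p.1 : K) * (p.2 : K) = k

variable {K : Type*} [Monoid K] {G H : Submonoid K}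

/-- `h ▷ g`, defined by `h * g = (h ▷ g) * (h ◁ g)`. -/
noncomputable def ZS.rtr (zs : ZS K G H) (h : H) (g : G) : G :=
  ((zs.exGH ((h : K) * (g : K))).choose).1

/-- `h ◁ g`, defined by `h * g = (h ▷ g) * (h ◁ g)`. -/
noncomputable def ZS.rtl (zs : ZS K G H) (h : H) (g : G) : H :=
  ((zs.exGH ((h : K) * (g : K))).choose).2

/-- `g ▶ h`, defined by `g * h = (g ▶ h) * (g ◀ h)`. -/
noncomputable def ZS.ltr (zs : ZS K G H) (g : G) (h : H) : H :=
  ((zs.exHG ((g : K) * (h : K))).choose).1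

/-- `g ◀ h`, defined by `g * h = (g ▶ h) * (g ◀ h)`. -/
noncomputable def ZS.ltl (zs : ZS K G H) (g : G) (h : H) : G :=
  ((zs.exHG ((g : K) * (h : K))).choose).2

/-- Right divisibility: `x` is a suffix of `y`. -/
def RDvd {M : Type*} [Monoid M] (x y : M) : Prop := ∃ u, y = u * x

/-- An atom of a monoid. -/
def MAtom {M : Type*} [Monoid M] (a : M) : Prop :=
  a ≠ 1 ∧ ∀ u v : M, a = u * v → u = 1 ∨ v = 1

/-- An atomic monoid: generated by its atoms, with bounded lengths of atomic
decompositions. -/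
def Atomic (M : Type*) [Monoid M] : Prop :=
  (∀ x : M, ∃ l : List M, (∀ a ∈ l, MAtom a) ∧ l.prod = x) ∧
  ∀ x : M, ∃ N : ℕ, ∀ l : List M, (∀ a ∈ l, MAtom a) → l.prod = x → l.length ≤ N

/-- `m` is the least common upper bound of the set `S` with respect to
left divisibility. -/
def IsDvdLUB {M : Type*} [Monoid M] (S : Set M) (m : M) : Prop :=
  (∀ s ∈ S, s ∣ m) ∧ ∀ n, (∀ s ∈ S, s ∣ n) → m ∣ n

/-- `m` is the least common upper bound of `x` and `y` with respect to left
divisibility. -/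
def IsDvdLCM {M : Type*} [Monoid M] (x y m : M) : Prop :=
  x ∣ m ∧ y ∣ m ∧ ∀ n, x ∣ n → y ∣ n → m ∣ n

/-- `d = Δ_x`, the least common upper bound of `{ y \ x : y ∈ M }`, where
`y * (y \ x) = y ∨ x`. -/
def IsDeltaOf {M : Type*} [Monoid M] (x d : M) : Prop :=
  IsDvdLUB {t : M | ∃ y, IsDvdLCM y x (y * t)} d

/-- A Garside structure on a monoid `M` with Garside element `Δ`. -/
structure GarsideStructure (M : Type*) [Monoid M] (Δ : M) : Prop where
  mul_left_cancel : ∀ a b c : M, a * b = a * c → b = c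
  mul_right_cancel : ∀ a b c : M, b * a = c * a → b = c
  atomic : Atomic M
  meet_left : ∀ x y : M, ∃ d, d ∣ x ∧ d ∣ y ∧ ∀ e, e ∣ x → e ∣ y → e ∣ d
  join_left : ∀ x y : M, ∃ m, x ∣ m ∧ y ∣ m ∧ ∀ n, x ∣ n → y ∣ n → m ∣ n
  meet_right : ∀ x y : M, ∃ d, RDvd d x ∧ RDvd d y ∧ ∀ e, RDvd e x → RDvd e y → RDvd e d
  join_right : ∀ x y : M, ∃ m, RDvd x m ∧ RDvd y m ∧ ∀ n, RDvd x n → RDvd y n → RDvd m n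
  balanced : ∀ x, x ∣ Δ ↔ RDvd x Δ
  div_finite : {x : M | x ∣ Δ}.Finite
  div_gen : Submonoid.closure {x : M | x ∣ Δ} = ⊤

end ZSPaper

/-!
Write `x = g * h` with `g ∈ G`, `h ∈ H`; it suffices that left multiplication by `g` and by `h`
is injective. Factor `y = a * b` as a `GH`-product. Then `g * y = (g * a) * b` and
`h * y = (h ▷ a) * ((h ◁ a) * b)` are again `GH`-factorisations, so by their uniqueness
`g * y` determines `g * a` and `b`, and `h * y` determines `h ▷ a` and `(h ◁ a) * b`.
Cancellation in `G`, injectivity of `h ▷ ·` and cancellation in `H` then recover `a` and `b`.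
-/

namespace ZSPaper.ZS

variable {K : Type*} [Monoid K] {G H : Submonoid K}

theorem mul_eq_mul_iff (zs : ZS K G H) {g₁ g₂ : G} {h₁ h₂ : H} :
    (g₁ : K) * h₁ = g₂ * h₂ ↔ g₁ = g₂ ∧ h₁ = h₂ := by
  refine ⟨fun h => Prod.ext_iff.mp ((zs.exGH _).unique (y₁ := (g₁, h₁)) (y₂ := (g₂, h₂)) h rfl), ?_⟩
  rintro ⟨rfl, rfl⟩
  rfl

theorem rtr_mul_rtl (zs : ZS K G H) (h : H) (g : G) : (zs.rtr h g : K) * zs.rtl h g = h * g :=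
  (zs.exGH _).choose_spec.1

theorem isLeftRegular_coe_left (zs : ZS K G H) (hG : ∀ g : G, IsLeftRegular g) (g : G) :
    IsLeftRegular (g : K) := by
  intro y z hyz
  obtain ⟨⟨a, b⟩, rfl, -⟩ := zs.exGH y
  obtain ⟨⟨c, d⟩, rfl, -⟩ := zs.exGH z
  have key : ((g * a : G) : K) * b = ((g * c : G) : K) * d := by
    simpa only [Submonoid.coe_mul, mul_assoc] using hyz
  obtain ⟨hac, rfl⟩ := zs.mul_eq_mul_iff.mp key
  rw [hG g hac]

theorem isLeftRegular_coe_right (zs : ZS K G H) (hH : ∀ h : H, IsLeftRegular h)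
    (hinj : ∀ h : H, Function.Injective (zs.rtr h)) (h : H) : IsLeftRegular (h : K) := by
  intro y z hyz
  obtain ⟨⟨a, b⟩, rfl, -⟩ := zs.exGH y
  obtain ⟨⟨c, d⟩, rfl, -⟩ := zs.exGH z
  have key : (zs.rtr h a : K) * ((zs.rtl h a * b : H) : K) =
      (zs.rtr h c : K) * ((zs.rtl h c * d : H) : K) := by
    simp only [Submonoid.coe_mul, ← mul_assoc, rtr_mul_rtl]
    simpa only [mul_assoc] using hyz
  obtain ⟨hac, hbd⟩ := zs.mul_eq_mul_iff.mp key
  obtain rfl := hinj h hac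
  rw [hH _ hbd]

theorem isLeftRegular (zs : ZS K G H) (hG : ∀ g : G, IsLeftRegular g)
    (hH : ∀ h : H, IsLeftRegular h) (hinj : ∀ h : H, Function.Injective (zs.rtr h)) (x : K) :
    IsLeftRegular x := by
  obtain ⟨⟨g, h⟩, rfl, -⟩ := zs.exGH x
  exact (zs.isLeftRegular_coe_left hG g).mul (zs.isLeftRegular_coe_right hH hinj h)

end ZSPaper.ZS

open ZSPaper Function

theorem stmt9 {K : Type*} [Monoid K] {G H : Submonoid K} (zs : ZS K G H)
    (hGl : ∀ a b c : G, a * b = a * c → b = c)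
    (hHl : ∀ a b c : H, a * b = a * c → b = c)
    (hinj : ∀ h : H, Function.Injective (zs.rtr h)) :
    ∀ x y z : K, x * y = x * z → y = z :=
  fun x _ _ => zs.isLeftRegular (fun a _ _ => hGl a _ _) (fun a _ _ => hHl a _ _) hinj x |>.eq_iff.mp
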